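/- Let f : {0,1}^n → {0,1} and suppose there exists an ℓ-variable max-sensitivity distribution D over restrictions: (1) with probability ≥ 0.9 at least ℓ variables are left free; (2) for every ρ in the support, the sensitivity of f|_ρ equals the number of free variables; (3) for every generalized monomial M (a product of variables x_i and complemented variables 1-x_j) and every t ∈ ℕ, Pr_{ρ~D}[deg(M|_ρ) ≥ t] ≤ 2^{-t}. Then the logarithm of the 1/3-approximate generalized sparsity of f is Ω(√ℓ). -/

import Mathlib

open Finset Classical

/-- A Boolean function viewed as a real-valued function. -/
noncomputable def toRealFn {n : ℕ} (f : (Fin n → Bool) → Bool) : (Fin n → Bool) → ℝ :=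
  fun x => if f x then 1 else 0

/-- Evaluation of a generalized polynomial: a real linear combination of generalized
monomials `∏_{i ∈ P} x_i · ∏_{j ∈ N} (1 - x_j)`, given by its coefficient function `b`. -/
noncomputable def gEval {n : ℕ} (b : Finset (Fin n) × Finset (Fin n) → ℝ)
    (x : Fin n → Bool) : ℝ :=
  ∑ p : Finset (Fin n) × Finset (Fin n),
    b p * (∏ i ∈ p.1, (if x i then (1 : ℝ) else 0)) *
      (∏ j ∈ p.2, (if x j then (0 : ℝ) else 1))

/-- The `1/3`-approximate generalized sparsity of `f`: the least number of generalized
monomials (with `P, N` disjoint) in a generalized polynomial approximating `f` within `1/3`. -/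
noncomputable def gasparsity {n : ℕ} (f : (Fin n → Bool) → Bool) : ℕ :=
  sInf {s : ℕ | ∃ b : Finset (Fin n) × Finset (Fin n) → ℝ,
    (∀ p, b p ≠ 0 → Disjoint p.1 p.2) ∧
    (∀ x, |gEval b x - toRealFn f x| ≤ 1 / 3) ∧
    ((Finset.univ : Finset (Finset (Fin n) × Finset (Fin n))).filter
        (fun p => b p ≠ 0)).card ≤ s}

/-- The free variables of a restriction `ρ : Fin n → Option Bool` (`none` = free). -/
def freeVars {n : ℕ} (ρ : Fin n → Option Bool) : Finset (Fin n) :=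
  (Finset.univ : Finset (Fin n)).filter (fun i => ρ i = none)

/-- The restricted function `f|_ρ`, presented on full inputs via overriding set variables. -/
def restrictFn {n : ℕ} (f : (Fin n → Bool) → Bool) (ρ : Fin n → Option Bool) :
    (Fin n → Bool) → Bool :=
  fun x => f (fun i => (ρ i).getD (x i))

/-- The set of sensitive coordinates of `f` at `x`, as a finset. -/
def sensF {n : ℕ} (f : (Fin n → Bool) → Bool) (x : Fin n → Bool) : Finset (Fin n) :=
  (Finset.univ : Finset (Fin n)).filter
    (fun i => f (Function.update x i (! x i)) ≠ f x)

/-- Probability of an event under a (finitely supported) distribution `D` on restrictions. -/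
noncomputable def prOf {n : ℕ} (D : (Fin n → Option Bool) → ℝ)
    (E : (Fin n → Option Bool) → Prop) : ℝ :=
  ∑ ρ ∈ (Finset.univ : Finset (Fin n → Option Bool)).filter E, D ρ

/-- Degree of the restricted generalized monomial `(∏_{i∈P} x_i ∏_{j∈N}(1-x_j))|_ρ`: it is
`0` if the monomial is killed (some `i ∈ P` set to 0, or some `j ∈ N` set to 1), and
otherwise the number of its free variables. -/
def gMonRestDeg {n : ℕ} (ρ : Fin n → Option Bool) (P N : Finset (Fin n)) : ℕ :=
  if (∃ i ∈ P, ρ i = some false) ∨ (∃ j ∈ N, ρ j = some true) then 0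
  else ((P ∪ N).filter (fun i => ρ i = none)).card

/-!
Take a generalized polynomial `Q` with `s` monomials that `1/3`-approximates `f`. By the union
bound over its monomials, some restriction `ρ` in the support of `D` leaves at least `ℓ`
variables free while cutting every monomial of `Q` down to degree at most `log₂ s + 1`; and `f|_ρ`
is sensitive to every free variable at some point `y`. Averaging `Q` over flipping each free
coordinate of `y` independently with probability `τ` yields a univariate polynomial in `τ` of
degree at most `log₂ s + 1` that is bounded by `4/3` on `[0, 1]`, and whose derivative at `0` is
the sum of the discrete derivatives of `Q` at `y`, of absolute value at least `ℓ / 3` by full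
sensitivity. Markov's inequality `|p'(0)| ≤ 2 d² max_{[0,1]} |p|` then forces
`ℓ ≤ 8 (log₂ s + 1)²`.
-/

open Polynomial

theorem abs_derivative_eval_one_le {P : ℝ[X]} {d : ℕ} {M : ℝ} (hdeg : P.natDegree ≤ d)
    (hP : ∀ x ∈ Set.Icc (-1 : ℝ) 1, |P.eval x| ≤ M) :
    |P.derivative.eval 1| ≤ d ^ 2 * M := by
  have markov (Q : ℝ[X]) (hQ : Q.natDegree ≤ d)
      (hQ1 : ∀ x ∈ Set.Icc (-1 : ℝ) 1, |Q.eval x| ≤ 1) : Q.derivative.eval 1 ≤ d ^ 2 := by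
    simpa [Chebyshev.derivative_T_eval_one] using
      Chebyshev.eval_iterate_derivative_le_of_forall_abs_le_one (k := 1) le_rfl
        (degree_le_of_natDegree_le hQ) hQ1
  rcases (le_trans (abs_nonneg _) (hP 1 (by simp))).eq_or_lt with hM | hM
  · have hP0 : P = 0 := P.eq_zero_of_infinite_isRoot <| (Set.Icc_infinite (by norm_num)).mono
      fun x hx => abs_nonpos_iff.mp (hM ▸ hP x hx)
    simp [hP0, ← hM]
  have hscaled (c : ℝ) (hc : |c| = M⁻¹) (x) (hx : x ∈ Set.Icc (-1 : ℝ) 1) :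
      |(C c * P).eval x| ≤ 1 := by
    rw [eval_mul, eval_C, abs_mul, hc, inv_mul_le_iff₀ hM, mul_one]
    exact hP x hx
  have hdeg' (c : ℝ) : (C c * P).natDegree ≤ d := natDegree_C_mul_le _ _ |>.trans hdeg
  have hup := markov _ (hdeg' M⁻¹) (hscaled _ (abs_of_pos (inv_pos.2 hM)))
  have hlow := markov _ (hdeg' (-M⁻¹)) (hscaled _ (by rw [abs_neg, abs_of_pos (inv_pos.2 hM)]))
  simp only [derivative_C_mul, eval_mul, eval_C, neg_mul, neg_le] at hup hlow
  rw [inv_mul_le_iff₀ hM] at hup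
  rw [le_inv_mul_iff₀ hM] at hlow
  rw [abs_le]
  constructor <;> linarith

theorem abs_derivative_eval_zero_le {P : ℝ[X]} {d : ℕ} {M : ℝ} (hdeg : P.natDegree ≤ d)
    (hP : ∀ τ ∈ Set.Icc (0 : ℝ) 1, |P.eval τ| ≤ M) :
    |P.derivative.eval 0| ≤ 2 * d ^ 2 * M := by
  set Q := P.comp (C (1 / 2) * (1 - X))
  have hQ : Q.natDegree ≤ d := by
    have h1 : (C (1 / 2 : ℝ) * (1 - X)).natDegree ≤ 1 := by compute_degree
    exact natDegree_comp_le.trans (by simpa using Nat.mul_le_mul hdeg h1)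
  have hQeval (x : ℝ) : Q.eval x = P.eval (1 / 2 * (1 - x)) := by simp [Q]
  have hQ1 : Q.derivative.eval 1 = -(P.derivative.eval 0) / 2 := by
    simp [Q, derivative_comp, div_eq_inv_mul, mul_comm]
  have hmarkov := abs_derivative_eval_one_le hQ fun x hx =>
    hQeval x ▸ hP _ ⟨by linarith [hx.2], by linarith [hx.1]⟩
  rw [hQ1, abs_div, abs_neg, abs_two] at hmarkov
  linarith

section FlipAverage

variable {ι : Type*} [DecidableEq ι]

def flipOn (y : ι → Bool) (S : Finset ι) : ι → Bool :=
  fun i => if i ∈ S then !y i else y i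

@[simp] lemma flipOn_empty (y : ι → Bool) : flipOn y ∅ = y := by
  funext i; simp [flipOn]

lemma flipOn_singleton (y : ι → Bool) (i : ι) : flipOn y {i} = Function.update y i (!y i) := by
  funext j; by_cases hj : j = i <;> simp [flipOn, hj]

/-- The expected value of `h` at `y` with each coordinate in `F` flipped independently with
probability `X`. -/
noncomputable def flipAverage (F : Finset ι) (y : ι → Bool) (h : (ι → Bool) → ℝ) : ℝ[X] :=
  ∑ S ∈ F.powerset, C (h (flipOn y S)) * X ^ #S * (1 - X) ^ (#F - #S)

variable {F : Finset ι} {y : ι → Bool} {h : (ι → Bool) → ℝ}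

lemma eval_flipAverage (τ : ℝ) : (flipAverage F y h).eval τ =
    ∑ S ∈ F.powerset, h (flipOn y S) * (τ ^ #S * (1 - τ) ^ (#F - #S)) := by
  simp [flipAverage, eval_finsetSum, mul_assoc]

lemma abs_eval_flipAverage_le {B : ℝ} (hh : ∀ x, |h x| ≤ B) {τ : ℝ} (hτ : τ ∈ Set.Icc 0 1) :
    |(flipAverage F y h).eval τ| ≤ B := by
  have hw (S : Finset ι) : 0 ≤ τ ^ #S * (1 - τ) ^ (#F - #S) :=
    mul_nonneg (pow_nonneg hτ.1 _) (pow_nonneg (sub_nonneg.2 hτ.2) _)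
  calc |(flipAverage F y h).eval τ|
      ≤ ∑ S ∈ F.powerset, |h (flipOn y S)| * (τ ^ #S * (1 - τ) ^ (#F - #S)) := by
        rw [eval_flipAverage]
        refine (abs_sum_le_sum_abs _ _).trans_eq (sum_congr rfl fun S _ => ?_)
        rw [abs_mul, abs_of_nonneg (hw S)]
    _ ≤ ∑ S ∈ F.powerset, B * (τ ^ #S * (1 - τ) ^ (#F - #S)) :=
        sum_le_sum fun S _ => mul_le_mul_of_nonneg_right (hh _) (hw S)
    _ = B := by rw [← mul_sum, sum_pow_mul_eq_add_pow, add_sub_cancel, one_pow, mul_one]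

lemma derivative_flipAverage_eval_zero :
    (flipAverage F y h).derivative.eval 0 = ∑ i ∈ F, (h (flipOn y {i}) - h y) := by
  have hterm (k m : ℕ) : (derivative ((X : ℝ[X]) ^ k * (1 - X) ^ m)).eval 0 =
      if k = 0 then -(m : ℝ) else if k = 1 then 1 else 0 := by
    rcases k with _ | _ | k <;> simp [derivative_mul, derivative_pow]
  simp only [flipAverage, derivative_sum, eval_finsetSum, mul_assoc, derivative_C_mul,
    eval_mul, eval_C, hterm, card_eq_zero, mul_ite, mul_zero, sum_ite, sum_const_zero, add_zero]
  have hsingletons : {S ∈ F.powerset | ¬S = ∅ ∧ #S = 1} = F.powersetCard 1 := by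
    ext S
    have hne : #S = 1 → ¬S = ∅ := fun h1 h0 => by simp [h0] at h1
    rw [mem_filter, mem_powersetCard, mem_powerset]
    tauto
  rw [filter_eq', if_pos (empty_mem_powerset F), sum_singleton, filter_filter, hsingletons,
    powersetCard_one, sum_map, sum_sub_distrib, sum_const]
  simp only [card_empty, Nat.sub_zero, flipOn_empty, nsmul_eq_mul, mul_one,
    Function.Embedding.coeFn_mk]
  ring

lemma flipAverage_sum {κ : Type*} (s : Finset κ) (c : κ → ℝ) (g : κ → (ι → Bool) → ℝ) :
    flipAverage F y (fun x => ∑ k ∈ s, c k * g k x) = ∑ k ∈ s, C (c k) * flipAverage F y (g k) := by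
  simp only [flipAverage, map_sum, map_mul, sum_mul, mul_sum]
  rw [sum_comm]
  exact sum_congr rfl fun _ _ => sum_congr rfl fun _ _ => by ring

lemma flipAverage_prod [Fintype ι] (φ : ι → Bool → ℝ) :
    flipAverage F y (fun x => ∏ i, φ i (x i)) =
      C (∏ i ∈ Fᶜ, φ i (y i)) * ∏ i ∈ F, (C (φ i (!y i)) * X + C (φ i (y i)) * (1 - X)) := by
  rw [prod_add, mul_sum, flipAverage]
  refine sum_congr rfl fun S hS => ?_
  have hSF := mem_powerset.1 hS
  have hflip : ∏ i, φ i (flipOn y S i) =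
      (∏ i ∈ Fᶜ, φ i (y i)) * ((∏ i ∈ S, φ i (!y i)) * ∏ i ∈ F \ S, φ i (y i)) := by
    rw [← prod_mul_prod_compl F, ← prod_sdiff hSF, mul_comm]
    congr 1
    · exact prod_congr rfl fun i hi => by
        rw [flipOn, if_neg fun hiS => mem_compl.1 hi (hSF hiS)]
    · rw [mul_comm]
      congr 1
      · exact prod_congr rfl fun i hi => by rw [flipOn, if_pos hi]
      · exact prod_congr rfl fun i hi => by rw [flipOn, if_neg (mem_sdiff.1 hi).2]
  simp only [hflip, prod_mul_distrib, prod_const, card_sdiff_of_subset hSF, map_mul, map_prod]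
  ring

lemma natDegree_flipAverage_prod_le [Fintype ι] (φ : ι → Bool → ℝ) :
    (flipAverage F y fun x => ∏ i, φ i (x i)).natDegree ≤ #{i ∈ F | φ i true ≠ φ i false} := by
  rw [flipAverage_prod, card_filter]
  refine (natDegree_C_mul_le _ _).trans ((natDegree_prod_le _ _).trans (sum_le_sum fun i _ => ?_))
  split_ifs with hφ
  · compute_degree
  · have hconst : φ i (!y i) = φ i (y i) := by cases y i <;> simp [not_not.1 hφ]
    rw [hconst, ← mul_add, add_sub_cancel, mul_one, natDegree_C]

end FlipAverage

section GeneralizedMonomial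

variable {n : ℕ}

def gMon (P N : Finset (Fin n)) (x : Fin n → Bool) : ℝ :=
  (∏ i ∈ P, if x i then 1 else 0) * ∏ j ∈ N, if x j then 0 else 1

lemma gEval_eq_sum (b : Finset (Fin n) × Finset (Fin n) → ℝ) (x : Fin n → Bool) :
    gEval b x = ∑ p, b p * gMon p.1 p.2 x := by
  simp only [gEval, gMon, mul_assoc]

def gMonFactor (P N : Finset (Fin n)) (i : Fin n) (v : Bool) : ℝ :=
  (if i ∈ P then (if v then 1 else 0) else 1) * (if i ∈ N then (if v then 0 else 1) else 1)

lemma gMon_eq_prod (P N : Finset (Fin n)) (x : Fin n → Bool) :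
    gMon P N x = ∏ i, gMonFactor P N i (x i) := by
  simp only [gMon, gMonFactor, prod_mul_distrib, prod_ite_mem, univ_inter]

lemma gMon_compl (P : Finset (Fin n)) (x : Fin n → Bool) :
    gMon P Pᶜ x = if P = univ.filter (x ·) then 1 else 0 := by
  split_ifs with hP
  · subst hP
    rw [gMon, prod_eq_one fun i hi => by simp_all, prod_eq_one fun i hi => by simp_all, mul_one]
  · obtain ⟨i, hi⟩ : ∃ i, ¬(i ∈ P ↔ x i) := by
      by_contra! h
      exact hP (by ext i; simp [h i])
    by_cases hiP : i ∈ P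
    · rw [gMon, prod_eq_zero hiP (by simp_all), zero_mul]
    · rw [gMon, prod_eq_zero (mem_compl.2 hiP) (by simp_all), mul_zero]

lemma exists_gEval_eq (f : (Fin n → Bool) → Bool) :
    ∃ b : Finset (Fin n) × Finset (Fin n) → ℝ,
      (∀ p, b p ≠ 0 → Disjoint p.1 p.2) ∧ gEval b = toRealFn f := by
  refine ⟨fun p => if p.2 = p.1ᶜ then toRealFn f (fun i => decide (i ∈ p.1)) else 0,
    fun p hp => ?_, funext fun x => ?_⟩
  · by_cases h : p.2 = p.1ᶜ
    · rw [h]; exact disjoint_compl_right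
    · simp [h] at hp
  · simp only [gEval_eq_sum, Fintype.sum_prod_type, ite_mul, zero_mul, sum_ite_eq', mem_univ,
      if_true, gMon_compl, mul_ite, mul_one, mul_zero]
    congr 1
    funext i
    simp

lemma exists_approx_card_le_gasparsity (f : (Fin n → Bool) → Bool) :
    ∃ b : Finset (Fin n) × Finset (Fin n) → ℝ, (∀ p, b p ≠ 0 → Disjoint p.1 p.2) ∧
      (∀ x, |gEval b x - toRealFn f x| ≤ 1 / 3) ∧ #{p | b p ≠ 0} ≤ gasparsity f := by
  obtain ⟨b, hdisj, hb⟩ := exists_gEval_eq f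
  exact Nat.sInf_mem (s := {s | ∃ b : Finset (Fin n) × Finset (Fin n) → ℝ,
    (∀ p, b p ≠ 0 → Disjoint p.1 p.2) ∧ (∀ x, |gEval b x - toRealFn f x| ≤ 1 / 3) ∧
      #{p | b p ≠ 0} ≤ s}) ⟨_, b, hdisj, fun x => by simp [hb], le_rfl⟩

end GeneralizedMonomial

section Restriction

variable {n : ℕ}

def fill (ρ : Fin n → Option Bool) (x : Fin n → Bool) : Fin n → Bool :=
  fun i => (ρ i).getD (x i)

lemma natDegree_flipAverage_gMon_le (ρ : Fin n → Option Bool) (x : Fin n → Bool)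
    (P N : Finset (Fin n)) :
    (flipAverage (freeVars ρ) (fill ρ x) (gMon P N)).natDegree ≤ gMonRestDeg ρ P N := by
  rw [funext (gMon_eq_prod P N), gMonRestDeg]
  split_ifs with hkill
  · suffices hfixed : ∃ i ∉ freeVars ρ, gMonFactor P N i (fill ρ x i) = 0 by
      obtain ⟨i, hi, h0⟩ := hfixed
      rw [flipAverage_prod, prod_eq_zero (mem_compl.2 hi) h0]
      simp
    rcases hkill with ⟨i, hi, hρ⟩ | ⟨i, hi, hρ⟩ <;>
      exact ⟨i, by simp [freeVars, hρ], by simp [gMonFactor, fill, hρ, hi]⟩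
  · refine (natDegree_flipAverage_prod_le _).trans (card_le_card fun i => ?_)
    simp only [freeVars, mem_filter, mem_univ, true_and, mem_union]
    rintro ⟨hfree, hφ⟩
    refine ⟨?_, hfree⟩
    by_contra! h
    simp [gMonFactor, h.1, h.2] at hφ

lemma natDegree_flipAverage_gEval_le {F : Finset (Fin n)} {y : Fin n → Bool}
    {b : Finset (Fin n) × Finset (Fin n) → ℝ} {d : ℕ}
    (hdeg : ∀ p, b p ≠ 0 → (flipAverage F y (gMon p.1 p.2)).natDegree ≤ d) :
    (flipAverage F y (gEval b)).natDegree ≤ d := by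
  rw [funext (gEval_eq_sum b), flipAverage_sum]
  refine natDegree_sum_le_of_forall_le _ _ fun p _ => ?_
  by_cases hp : b p = 0
  · simp [hp]
  · exact (natDegree_C_mul_le _ _).trans (hdeg p hp)

lemma fill_update_of_eq_none {ρ : Fin n → Option Bool} {i : Fin n} (hi : ρ i = none)
    (x : Fin n → Bool) (v : Bool) :
    fill ρ (Function.update x i v) = Function.update (fill ρ x) i v := by
  funext j
  by_cases hj : j = i
  · subst hj; simp [fill, hi]
  · simp [fill, hj]

lemma fill_update_of_eq_some {ρ : Fin n → Option Bool} {i : Fin n} {c : Bool}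
    (hi : ρ i = some c) (x : Fin n → Bool) (v : Bool) :
    fill ρ (Function.update x i v) = fill ρ x := by
  funext j
  by_cases hj : j = i
  · subst hj; simp [fill, hi]
  · simp [fill, hj]

lemma sensF_restrictFn (f : (Fin n → Bool) → Bool) (ρ : Fin n → Option Bool)
    (x : Fin n → Bool) : sensF (restrictFn f ρ) x = freeVars ρ ∩ sensF f (fill ρ x) := by
  ext i
  simp only [sensF, freeVars, mem_inter, mem_filter, mem_univ, true_and]
  change f (fill ρ _) ≠ f (fill ρ x) ↔ _
  cases hi : ρ i with
  | none => simp [fill_update_of_eq_none hi, fill, hi]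
  | some c => simp [fill_update_of_eq_some hi]

lemma freeVars_subset_sensF {f : (Fin n → Bool) → Bool} {ρ : Fin n → Option Bool}
    {x : Fin n → Bool} (h : #(sensF (restrictFn f ρ) x) = #(freeVars ρ)) :
    freeVars ρ ⊆ sensF f (fill ρ x) := by
  rw [sensF_restrictFn] at h
  exact inter_eq_left.1 (eq_of_subset_of_card_le inter_subset_left h.ge)

end Restriction

section Sensitivity

variable {n : ℕ} {f : (Fin n → Bool) → Bool} {h : (Fin n → Bool) → ℝ} {F : Finset (Fin n)}
  {y : Fin n → Bool}

lemma card_div_three_le_abs_sum_sub (happrox : ∀ x, |h x - toRealFn f x| ≤ 1 / 3)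
    (hsens : F ⊆ sensF f y) : (#F : ℝ) / 3 ≤ |∑ i ∈ F, (h (flipOn y {i}) - h y)| := by
  set s : ℝ := 1 - 2 * toRealFn f y
  have hs : |s| = 1 := by cases hy : f y <;> norm_num [s, toRealFn, hy]
  have hstep (i) (hi : i ∈ F) : 1 / 3 ≤ s * (h (flipOn y {i}) - h y) := by
    have hflip : f (flipOn y {i}) = !f y := by
      rw [flipOn_singleton]
      exact Bool.eq_not.2 (mem_filter.1 (hsens hi)).2
    have h₁ := abs_le.1 (happrox y)
    have h₂ := abs_le.1 (happrox (flipOn y {i}))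
    cases hy : f y <;> simp only [s, toRealFn, hflip, hy] at h₁ h₂ ⊢ <;> norm_num at h₁ h₂ ⊢ <;>
      linarith
  calc (#F : ℝ) / 3 = ∑ i ∈ F, (1 / 3 : ℝ) := by rw [sum_const, nsmul_eq_mul]; ring
    _ ≤ s * ∑ i ∈ F, (h (flipOn y {i}) - h y) := by rw [mul_sum]; exact sum_le_sum hstep
    _ ≤ |∑ i ∈ F, (h (flipOn y {i}) - h y)| := by
      simpa [abs_mul, hs] using le_abs_self (s * ∑ i ∈ F, (h (flipOn y {i}) - h y))

theorem card_le_of_approx_of_natDegree_flipAverage_le {d : ℕ}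
    (happrox : ∀ x, |h x - toRealFn f x| ≤ 1 / 3) (hsens : F ⊆ sensF f y)
    (hdeg : (flipAverage F y h).natDegree ≤ d) : (#F : ℝ) ≤ 8 * d ^ 2 := by
  have hbound (x) : |h x| ≤ 4 / 3 := by
    have : |toRealFn f x| ≤ 1 := by unfold toRealFn; split_ifs <;> norm_num
    linarith [abs_sub_abs_le_abs_sub (h x) (toRealFn f x), happrox x]
  have hupper := abs_derivative_eval_zero_le hdeg fun τ hτ => abs_eval_flipAverage_le hbound hτ
  have hlower := card_div_three_le_abs_sum_sub happrox hsens
  rw [← derivative_flipAverage_eval_zero] at hlower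
  linarith

end Sensitivity

theorem card_freeVars_le {n : ℕ} {f : (Fin n → Bool) → Bool} {ρ : Fin n → Option Bool}
    {x : Fin n → Bool} {b : Finset (Fin n) × Finset (Fin n) → ℝ} {d : ℕ}
    (happrox : ∀ x, |gEval b x - toRealFn f x| ≤ 1 / 3)
    (hsens : #(sensF (restrictFn f ρ) x) = #(freeVars ρ))
    (hdeg : ∀ p, b p ≠ 0 → gMonRestDeg ρ p.1 p.2 ≤ d) : (#(freeVars ρ) : ℝ) ≤ 8 * d ^ 2 :=
  card_le_of_approx_of_natDegree_flipAverage_le happrox (freeVars_subset_sensF hsens)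
    (natDegree_flipAverage_gEval_le fun p hp =>
      (natDegree_flipAverage_gMon_le ρ x p.1 p.2).trans (hdeg p hp))

lemma exists_of_sum_prOf_lt {n : ℕ} {ι : Type*} {D : (Fin n → Option Bool) → ℝ}
    (hD : ∀ ρ, 0 ≤ D ρ) {E : (Fin n → Option Bool) → Prop} (T : Finset ι)
    (B : ι → (Fin n → Option Bool) → Prop) (hlt : ∑ p ∈ T, prOf D (B p) < prOf D E) :
    ∃ ρ, D ρ ≠ 0 ∧ E ρ ∧ ∀ p ∈ T, ¬B p ρ := by
  by_contra! hcover
  refine hlt.not_ge ?_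
  simp only [prOf, sum_filter]
  rw [sum_comm]
  refine sum_le_sum fun ρ _ => ?_
  have hnonneg (p : ι) : 0 ≤ if B p ρ then D ρ else 0 := by split_ifs <;> simp [hD ρ]
  by_cases hρ : D ρ ≠ 0 ∧ E ρ
  · obtain ⟨p, hp, hB⟩ := hcover ρ hρ.1 hρ.2
    simpa [hρ.2, hB] using single_le_sum (fun p _ => hnonneg p) hp
  · have hzero : (if E ρ then D ρ else 0) = 0 := by
      split_ifs with hE
      · exact not_not.1 fun hne => hρ ⟨hne, hE⟩
      · rfl
    rw [hzero]
    exact sum_nonneg fun p _ => hnonneg p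

lemma natCast_mul_half_pow_log_add_two_le {k s : ℕ} (hk : k ≤ s) :
    (k : ℝ) * (1 / 2) ^ (Nat.log 2 s + 2) ≤ 1 / 2 := by
  have hs : (s : ℝ) ≤ 2 ^ (Nat.log 2 s + 1) := by
    exact_mod_cast (Nat.lt_pow_succ_log_self one_lt_two s).le
  calc (k : ℝ) * (1 / 2) ^ (Nat.log 2 s + 2)
        ≤ 2 ^ (Nat.log 2 s + 1) * (1 / 2) ^ (Nat.log 2 s + 2) :=
        mul_le_mul_of_nonneg_right ((Nat.cast_le.2 hk).trans hs) (by positivity)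
    _ = 1 / 2 := by rw [pow_succ _ (Nat.log 2 s + 1), ← mul_assoc, ← mul_pow]; norm_num

lemma log_two_div_sqrt_eight_mul_sqrt_sub_log_two_le {ℓ s : ℕ}
    (h : (ℓ : ℝ) ≤ 8 * (Nat.log 2 s + 1) ^ 2) :
    Real.log 2 / √8 * √ℓ - Real.log 2 ≤ Real.log s := by
  have hsqrt : √ℓ ≤ √8 * (Nat.log 2 s + 1) := by
    simpa [Real.sqrt_mul, Real.sqrt_sq (by positivity : (0 : ℝ) ≤ Nat.log 2 s + 1)] using
      Real.sqrt_le_sqrt h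
  have hlog : (Nat.log 2 s : ℝ) * Real.log 2 ≤ Real.log s := by
    have := Real.natLog_le_logb s 2
    push_cast at this
    rw [Real.logb, le_div_iff₀ (Real.log_pos one_lt_two)] at this
    exact_mod_cast this
  calc Real.log 2 / √8 * √ℓ - Real.log 2
      ≤ Real.log 2 / √8 * (√8 * (Nat.log 2 s + 1)) - Real.log 2 := by gcongr
    _ = Nat.log 2 s * Real.log 2 := by field_simp; ring
    _ ≤ Real.log s := hlog

/-- If `f` admits an `ℓ`-variable max-sensitivity distribution over restrictions, then
`log (approximate generalized sparsity of f) = Ω(√ℓ)`. -/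
theorem stmt18 :
    ∃ c : ℝ, 0 < c ∧ ∃ C : ℝ, 0 ≤ C ∧
      ∀ (n ℓ : ℕ) (f : (Fin n → Bool) → Bool) (D : (Fin n → Option Bool) → ℝ),
        (∀ ρ, 0 ≤ D ρ) → (∑ ρ : Fin n → Option Bool, D ρ) = 1 →
        (0.9 : ℝ) ≤ prOf D (fun ρ => ℓ ≤ (freeVars ρ).card) →
        (∀ ρ, D ρ ≠ 0 →
          (∀ x, (sensF (restrictFn f ρ) x).card ≤ (freeVars ρ).card) ∧
          (∃ x, (sensF (restrictFn f ρ) x).card = (freeVars ρ).card)) →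
        (∀ P N : Finset (Fin n), Disjoint P N → ∀ t : ℕ,
          prOf D (fun ρ => t ≤ gMonRestDeg ρ P N) ≤ (1 / 2 : ℝ) ^ t) →
        c * Real.sqrt ℓ - C ≤ Real.log (gasparsity f) := by
  refine ⟨Real.log 2 / √8, by positivity, Real.log 2, by positivity, ?_⟩
  intro n ℓ f D hD _ hfree hsens hmon
  obtain ⟨b, hdisj, happrox, hcard⟩ := exists_approx_card_le_gasparsity f
  set L := Nat.log 2 (gasparsity f)
  obtain ⟨ρ, hρD, hρℓ, hρdeg⟩ := exists_of_sum_prOf_lt hD {p | b p ≠ 0}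
    (fun p ρ => L + 2 ≤ gMonRestDeg ρ p.1 p.2) <| calc
      ∑ p ∈ {p | b p ≠ 0}, prOf D (fun ρ => L + 2 ≤ gMonRestDeg ρ p.1 p.2)
          ≤ #{p | b p ≠ 0} * (1 / 2 : ℝ) ^ (L + 2) := by
        rw [← nsmul_eq_mul]
        exact sum_le_card_nsmul _ _ _ fun p hp => hmon _ _ (hdisj p (mem_filter.1 hp).2) _
      _ ≤ 1 / 2 := natCast_mul_half_pow_log_add_two_le hcard
      _ < prOf D (fun ρ => ℓ ≤ #(freeVars ρ)) := by linarith
  obtain ⟨x, hx⟩ := (hsens ρ hρD).2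
  have hdeg (p) (hp : b p ≠ 0) : gMonRestDeg ρ p.1 p.2 ≤ L + 1 := by
    have := hρdeg p (by simpa using hp)
    omega
  refine log_two_div_sqrt_eight_mul_sqrt_sub_log_two_le ?_
  exact_mod_cast (Nat.cast_le.2 hρℓ).trans (card_freeVars_le happrox hx hdeg)
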